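/- For every real h̄ > 0 and every x ∈ (0,1), the Lorentzian inversion kernel K(x) := x^{h̄−2} · ₂F₁(h̄,h̄;2h̄;x) satisfies the adjoint Casimir equation d/dx[ (1−x) · d/dx( x² · K(x) ) ] = h̄(h̄−1) · K(x). -/

import Mathlib

open Real

/-- Pochhammer symbol `(a)_n = a (a+1) ⋯ (a+n-1)`. -/
noncomputable def poch (a : ℝ) (n : ℕ) : ℝ := (ascPochhammer ℝ n).eval a

/-- Gauss hypergeometric series `₂F₁(a,b;c;x)`. -/
noncomputable def F21 (a b c x : ℝ) : ℝ :=
  ∑' n : ℕ, poch a n * poch b n / (poch c n * (n.factorial : ℝ)) * x ^ n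

/-- The Lorentzian inversion kernel `K(x) = x^{h̄−2} ₂F₁(h̄,h̄;2h̄;x)`. -/
noncomputable def invKernel (hb x : ℝ) : ℝ := x ^ (hb - 2) * F21 hb hb (2 * hb) x

/-!
Since `x² K(x) = x^h̄ F(x)` with `F = ₂F₁(h̄,h̄;2h̄;·)`, expanding the left-hand side gives
`x^(h̄-2) (h̄(h̄-1) F + x (x(1-x) F'' + (2h̄ - (2h̄+1)x) F' - h̄² F))`, and the bracket
multiplying `x` vanishes by Gauss's hypergeometric equation. That equation holds coefficientwise
by the recurrence `(c+n)(n+1) uₙ₊₁ = (a+n)(b+n) uₙ` of the coefficients of `₂F₁`. For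
`a = b = h̄`, `c = 2h̄` these coefficients are eventually decreasing, hence bounded, which
justifies differentiating termwise.
-/

open Asymptotics Filter

noncomputable def powerSum (u : ℕ → ℝ) (x : ℝ) : ℝ := ∑' n, u n * x ^ n

def derivCoeff (u : ℕ → ℝ) (n : ℕ) : ℝ := (n + 1) * u (n + 1)

theorem isBigO_natCast_add_one : (fun n : ℕ => (n : ℝ) + 1) =O[atTop] fun n => (n : ℝ) := by
  refine (isBigO_refl _ _).add (IsBigO.of_bound 1 ?_)
  filter_upwards [eventually_ge_atTop 1] with n hn
  simpa using hn

theorem HasSum.mul_pow_of_succ {f g : ℕ → ℝ} {x s : ℝ} (h : HasSum (fun n => g n * x ^ n) s)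
    (hfg : ∀ n, f (n + 1) = g n) (h0 : f 0 = 0) : HasSum (fun n => f n * x ^ n) (x * s) := by
  have hshift : HasSum (fun n => f (n + 1) * x ^ (n + 1)) (x * s) :=
    (h.mul_left x).congr_fun fun n => by rw [hfg]; ring
  simpa [h0] using (hasSum_nat_add_iff (f := fun n => f n * x ^ n) 1).1 hshift

section PolynomialGrowth

variable {u : ℕ → ℝ} {k : ℕ} (hu : u =O[atTop] fun n => (n : ℝ) ^ k)
include hu

theorem isBigO_derivCoeff : derivCoeff u =O[atTop] fun n => (n : ℝ) ^ (k + 1) := by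
  have hshift : (fun n => u (n + 1)) =O[atTop] fun n => (n : ℝ) ^ k :=
    (hu.comp_tendsto (tendsto_add_atTop_nat 1)).trans <| by
      simpa [Function.comp_def] using isBigO_natCast_add_one.pow k
  have := isBigO_natCast_add_one.mul hshift
  simp only [← pow_succ'] at this
  exact this

theorem summable_norm_mul_pow {x : ℝ} (hx : |x| < 1) : Summable fun n => ‖u n * x ^ n‖ :=
  summable_norm_mul_geometric_of_norm_lt_one' hx (by simpa using hu)

theorem hasSum_powerSum {x : ℝ} (hx : |x| < 1) : HasSum (fun n => u n * x ^ n) (powerSum u x) :=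
  (summable_norm_mul_pow hu hx).of_norm.hasSum

theorem hasDerivAt_powerSum {x : ℝ} (hx : |x| < 1) :
    HasDerivAt (powerSum u) (powerSum (derivCoeff u) x) x := by
  obtain ⟨r, hxr, hr1⟩ := exists_between hx
  have hr : |r| < 1 := by rwa [abs_of_nonneg ((abs_nonneg x).trans hxr.le)]
  have hbound : Summable fun n => ‖n * u n * r ^ (n - 1)‖ :=
    (summable_nat_add_iff 1).1 <| (summable_norm_mul_pow (isBigO_derivCoeff hu) hr).congr
      fun n => by simp [derivCoeff]
  have hterm : ∀ n, ∀ y ∈ Set.Ioo (-r) r,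
      ‖u n * (n * y ^ (n - 1))‖ ≤ ‖n * u n * r ^ (n - 1)‖ := by
    intro n y hy
    rw [mul_left_comm, ← mul_assoc]
    simp only [norm_mul, norm_pow]
    gcongr
    exact (abs_lt.2 hy).le.trans (le_abs_self r)
  have hxmem : x ∈ Set.Ioo (-r) r := abs_lt.1 hxr
  have hderiv := hasDerivAt_tsum_of_isPreconnected hbound isOpen_Ioo isPreconnected_Ioo
    (fun n y _ => (hasDerivAt_pow n y).const_mul (u n)) hterm hxmem
    (summable_norm_mul_pow hu (hxr.trans hr1)).of_norm hxmem
  have hsum : ∑' n : ℕ, u n * (n * x ^ (n - 1)) = powerSum (derivCoeff u) x := by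
    rw [(Summable.of_norm_bounded hbound fun n => hterm n x hxmem).tsum_eq_zero_add]
    simp only [powerSum, derivCoeff, Nat.cast_zero, zero_mul, mul_zero, zero_add, Nat.cast_add,
      Nat.cast_one, Nat.add_sub_cancel]
    exact tsum_congr fun n => by ring
  exact hsum ▸ hderiv

theorem hasDerivAt_rpow_mul_powerSum (s : ℝ) {x : ℝ} (hx : x ∈ Set.Ioo (0 : ℝ) 1) :
    HasDerivAt (fun y => y ^ s * powerSum u y)
      (s * x ^ (s - 1) * powerSum u x + x ^ s * powerSum (derivCoeff u) x) x :=
  (hasDerivAt_rpow_const (Or.inl hx.1.ne')).mul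
    (hasDerivAt_powerSum hu (abs_lt.2 ⟨(neg_lt_zero.2 one_pos).trans hx.1, hx.2⟩))

/-- Multiplying by `x` shifts indices, so the coefficient of `xⁿ` on the left-hand side is
`(c+n)(n+1) u (n+1) - (a+n)(b+n) u n`. -/
theorem powerSum_ode_of_recurrence {a b c : ℝ}
    (hrec : ∀ n : ℕ, (c + n) * (n + 1) * u (n + 1) = (a + n) * (b + n) * u n)
    {x : ℝ} (hx : |x| < 1) :
    x * (1 - x) * powerSum (derivCoeff (derivCoeff u)) x
      + (c - (a + b + 1) * x) * powerSum (derivCoeff u) x - a * b * powerSum u x = 0 := by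
  have hu₁ := isBigO_derivCoeff hu
  have h₀ := hasSum_powerSum hu hx
  have h₁ := hasSum_powerSum hu₁ hx
  have h₂ := hasSum_powerSum (isBigO_derivCoeff hu₁) hx
  have hx₁ : HasSum (fun n : ℕ => (n : ℝ) * u n * x ^ n) (x * powerSum (derivCoeff u) x) :=
    h₁.mul_pow_of_succ (fun n => by simp [derivCoeff]) (by simp)
  have hx₂ : HasSum (fun n : ℕ => (n : ℝ) * derivCoeff u n * x ^ n)
      (x * powerSum (derivCoeff (derivCoeff u)) x) :=
    h₂.mul_pow_of_succ (fun n => by simp [derivCoeff]) (by simp)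
  have hxx₂ : HasSum (fun n : ℕ => ((n : ℝ) - 1) * n * u n * x ^ n)
      (x * (x * powerSum (derivCoeff (derivCoeff u)) x)) :=
    hx₂.mul_pow_of_succ (fun n => by simp [derivCoeff]; ring) (by simp)
  have hsum := ((hx₂.sub hxx₂).add ((h₁.mul_left c).sub (hx₁.mul_left (a + b + 1)))).sub
    (h₀.mul_left (a * b))
  have hzero := hsum.unique (by
    convert hasSum_zero with n
    simp only [derivCoeff]
    linear_combination x ^ n * hrec n)
  linear_combination hzero

end PolynomialGrowth

noncomputable def hypergeomCoeff (a b c : ℝ) (n : ℕ) : ℝ :=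
  poch a n * poch b n / (poch c n * n.factorial)

theorem F21_eq_powerSum (a b c x : ℝ) : F21 a b c x = powerSum (hypergeomCoeff a b c) x := rfl

theorem poch_succ (a : ℝ) (n : ℕ) : poch a (n + 1) = poch a n * (a + n) :=
  ascPochhammer_succ_eval n a

theorem poch_ne_zero {c : ℝ} (hc : ∀ k : ℕ, c + k ≠ 0) (n : ℕ) : poch c n ≠ 0 := by
  induction n with
  | zero => simp [poch]
  | succ n ih => rw [poch_succ]; exact mul_ne_zero ih (hc n)

theorem hypergeomCoeff_succ {a b c : ℝ} (hc : ∀ k : ℕ, c + k ≠ 0) (n : ℕ) :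
    (c + n) * (n + 1) * hypergeomCoeff a b c (n + 1)
      = (a + n) * (b + n) * hypergeomCoeff a b c n := by
  have := poch_ne_zero hc n
  have := hc n
  simp only [hypergeomCoeff, poch_succ, Nat.factorial_succ, Nat.cast_mul, Nat.cast_succ]
  field_simp

theorem hypergeomCoeff_pos {a b c : ℝ} (ha : 0 < a) (hb : 0 < b) (hc : 0 < c) (n : ℕ) :
    0 < hypergeomCoeff a b c n := by
  unfold hypergeomCoeff poch
  have := ascPochhammer_pos n a ha
  have := ascPochhammer_pos n b hb
  have := ascPochhammer_pos n c hc
  positivity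

theorem hypergeomCoeff_succ_le {a b c : ℝ} (ha : 0 < a) (hb : 0 < b) (hab : a + b ≤ c) {n : ℕ}
    (hn : a * b ≤ n) : hypergeomCoeff a b c (n + 1) ≤ hypergeomCoeff a b c n := by
  have hc : 0 < c := by linarith
  have hrec := hypergeomCoeff_succ (a := a) (b := b) (c := c) (fun k => by positivity) n
  have hfactor : (a + n) * (b + n) ≤ (c + n) * (n + 1) := by nlinarith
  refine le_of_mul_le_mul_left ?_ (by positivity : (0 : ℝ) < (c + n) * (n + 1))
  rw [hrec]
  exact mul_le_mul_of_nonneg_right hfactor (hypergeomCoeff_pos ha hb hc n).le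

theorem hypergeomCoeff_isBigO_one {a b c : ℝ} (ha : 0 < a) (hb : 0 < b) (hab : a + b ≤ c) :
    hypergeomCoeff a b c =O[atTop] fun _ => (1 : ℝ) := by
  have hc : 0 < c := by linarith
  set N := ⌈a * b⌉₊
  refine (isBigO_one_iff ℝ).2 ⟨‖hypergeomCoeff a b c N‖, eventually_map.2 ?_⟩
  filter_upwards [eventually_ge_atTop N] with n hn
  rw [Real.norm_of_nonneg (hypergeomCoeff_pos ha hb hc n).le,
    Real.norm_of_nonneg (hypergeomCoeff_pos ha hb hc N).le]
  induction n, hn using Nat.le_induction with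
  | base => rfl
  | succ n hn ih =>
    exact (hypergeomCoeff_succ_le ha hb hab ((Nat.le_ceil _).trans (by exact_mod_cast hn))).trans ih

theorem sq_mul_invKernel (hb : ℝ) {w : ℝ} (hw : 0 < w) :
    w ^ 2 * invKernel hb w = w ^ hb * F21 hb hb (2 * hb) w := by
  have hpow : w ^ hb = w ^ (hb - 2) * w ^ 2 := by
    simpa using rpow_add_natCast hw.ne' (hb - 2) 2
  rw [invKernel, hpow]
  ring

/-- for h̄ > 0 and x ∈ (0,1), the inversion kernel satisfies the
adjoint Casimir equation `d/dx[(1−x)·d/dx(x²·K(x))] = h̄(h̄−1)·K(x)`. -/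
theorem adjoint_casimir_eq (hb : ℝ) (hhb : 0 < hb) (x : ℝ) (hx : x ∈ Set.Ioo (0 : ℝ) 1) :
    deriv (fun y => (1 - y) * deriv (fun w => w ^ 2 * invKernel hb w) y) x
      = hb * (hb - 1) * invKernel hb x := by
  set u := hypergeomCoeff hb hb (2 * hb)
  have hu : u =O[atTop] fun n : ℕ => (n : ℝ) ^ 0 := by
    simpa using hypergeomCoeff_isBigO_one hhb hhb (by linarith)
  have hψ_eq : (fun y => (1 - y) * deriv (fun w => w ^ 2 * invKernel hb w) y) =ᶠ[nhds x]
      fun y => (1 - y) *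
        (hb * (y ^ (hb - 1) * powerSum u y) + y ^ hb * powerSum (derivCoeff u) y) := by
    filter_upwards [Ioo_mem_nhds hx.1 hx.2] with y hy
    have hφ := (hasDerivAt_rpow_mul_powerSum hu hb hy).congr_of_eventuallyEq
      (eventually_of_mem (Ioo_mem_nhds hy.1 hy.2) fun w hw => sq_mul_invKernel hb hw.1)
    rw [hφ.deriv]
    ring
  have hψ_deriv := ((hasDerivAt_id' x).const_sub 1).mul
    (((hasDerivAt_rpow_mul_powerSum hu (hb - 1) hx).const_mul hb).add
      (hasDerivAt_rpow_mul_powerSum (isBigO_derivCoeff hu) hb hx))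
  have hode := powerSum_ode_of_recurrence hu (hypergeomCoeff_succ fun k => by positivity)
    (abs_lt.2 ⟨(neg_lt_zero.2 one_pos).trans hx.1, hx.2⟩)
  have hx0 := hx.1.ne'
  have e1 : x ^ (hb - 1) = x ^ (hb - 2) * x := by
    rw [← rpow_add_one hx0]; ring_nf
  have e2 : x ^ hb = x ^ (hb - 2) * x ^ 2 := by
    simpa using rpow_add_natCast hx0 (hb - 2) 2
  rw [hψ_eq.deriv_eq]
  refine hψ_deriv.deriv.trans ?_
  simp only [Pi.add_apply]
  rw [invKernel, F21_eq_powerSum, show hb - 1 - 1 = hb - 2 by ring, e1, e2]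
  linear_combination x ^ (hb - 2) * x * hode
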